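/- Let 𝔩 be the F₁₁-Lie algebra with brackets [E₀,E₁] = αE₀, [E₀,E₂] = βE₀, [E₁,E₂] = 0 and the standard B-metric g. Then R(E₀,E₁,E₀,E₁) = α², R(E₀,E₂,E₀,E₂) = β², R(E₀,E₁,E₂,E₀) = -αβ, the scalar curvature is τ = 2(β² - α²), and R(x, y, φz, φw) = 0 for all x, y, z, w (where φE₀ = 0, φE₁ = E₂, φE₂ = -E₁). -/

import Mathlib

/-!
The Koszul formula determines the connection: `∇ₓ v = x₀ • A v` with `A` the
endomorphism `A v = (α v₁ + β v₂, -α v₀, β v₀)`. Since `∇ₓ ∇ᵧ = x₀ y₀ A²` is symmetric in `x, y`,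
the curvature reduces to `R(x, y) z = -∇_{[x,y]} z = -[x,y]₀ • A z`, from which every component
is read off. Moreover `A` maps the image of `φ` into `ℝ E₀`, which is `g`-orthogonal to the
image of `φ`; hence `R(x, y, φz, φw) = 0`.
-/

noncomputable section

/-- Standard basis of ℝ³. -/
def E3 (i : Fin 3) : Fin 3 → ℝ := Pi.single i 1

/-- The B-metric g with g(e₀,e₀)=g(e₁,e₁)=1, g(e₂,e₂)=-1, off-diagonal zero. -/
def gB (x y : Fin 3 → ℝ) : ℝ := x 0 * y 0 + x 1 * y 1 - x 2 * y 2

/-- The endomorphism φ: φe₀ = 0, φe₁ = e₂, φe₂ = -e₁. -/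
def phi3 (x : Fin 3 → ℝ) : Fin 3 → ℝ := ![0, -x 2, x 1]

/-- The 1-form η = e₀*. -/
def eta3 (x : Fin 3 → ℝ) : ℝ := x 0
/-- Curvature tensor R(x,y)z = ∇ₓ∇ᵧz - ∇ᵧ∇ₓz - ∇_{[x,y]}z of a bilinear connection. -/
def curv (nabla : (Fin 3 → ℝ) →ₗ[ℝ] (Fin 3 → ℝ) →ₗ[ℝ] (Fin 3 → ℝ))
    (br : (Fin 3 → ℝ) → (Fin 3 → ℝ) → (Fin 3 → ℝ)) (x y z : Fin 3 → ℝ) : Fin 3 → ℝ :=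
  nabla x (nabla y z) - nabla y (nabla x z) - nabla (br x y) z

/-- Curvature components R(Eᵢ,Eⱼ,Eₖ,Eₗ) = g(R(Eᵢ,Eⱼ)Eₖ, Eₗ). -/
def Rc (nabla : (Fin 3 → ℝ) →ₗ[ℝ] (Fin 3 → ℝ) →ₗ[ℝ] (Fin 3 → ℝ))
    (br : (Fin 3 → ℝ) → (Fin 3 → ℝ) → (Fin 3 → ℝ)) (i j k l : Fin 3) : ℝ :=
  gB (curv nabla br (E3 i) (E3 j) (E3 k)) (E3 l)

/-- Ricci tensor ρⱼₖ = R₀ⱼₖ₀ + R₁ⱼₖ₁ - R₂ⱼₖ₂. -/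
def ricci (nabla : (Fin 3 → ℝ) →ₗ[ℝ] (Fin 3 → ℝ) →ₗ[ℝ] (Fin 3 → ℝ))
    (br : (Fin 3 → ℝ) → (Fin 3 → ℝ) → (Fin 3 → ℝ)) (j k : Fin 3) : ℝ :=
  Rc nabla br 0 j k 0 + Rc nabla br 1 j k 1 - Rc nabla br 2 j k 2

/-- Scalar curvature τ = ρ₀₀ + ρ₁₁ - ρ₂₂. -/
def scal (nabla : (Fin 3 → ℝ) →ₗ[ℝ] (Fin 3 → ℝ) →ₗ[ℝ] (Fin 3 → ℝ))
    (br : (Fin 3 → ℝ) → (Fin 3 → ℝ) → (Fin 3 → ℝ)) : ℝ :=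
  ricci nabla br 0 0 + ricci nabla br 1 1 - ricci nabla br 2 2

/-- The F₁₁-bracket: [E₀,E₁] = αE₀, [E₀,E₂] = βE₀, [E₁,E₂] = 0. -/
def brF11 (α β : ℝ) (x y : Fin 3 → ℝ) : Fin 3 → ℝ :=
  ![α * (x 0 * y 1 - x 1 * y 0) + β * (x 0 * y 2 - x 2 * y 0), 0, 0]

def connOpF11 (α β : ℝ) : (Fin 3 → ℝ) →ₗ[ℝ] (Fin 3 → ℝ) :=
  Matrix.toLin' !![0, α, β; -α, 0, 0; β, 0, 0]

def nablaF11 (α β : ℝ) : (Fin 3 → ℝ) →ₗ[ℝ] (Fin 3 → ℝ) →ₗ[ℝ] (Fin 3 → ℝ) :=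
  (LinearMap.proj 0).smulRight (connOpF11 α β)

lemma nablaF11_apply (α β : ℝ) (x v : Fin 3 → ℝ) :
    nablaF11 α β x v = x 0 • ![α * v 1 + β * v 2, -(α * v 0), β * v 0] := by
  funext k
  fin_cases k <;> simp [nablaF11, connOpF11, dotProduct, Fin.sum_univ_three]

lemma eq_of_forall_gB_E3 {v w : Fin 3 → ℝ} (h : ∀ k, gB v (E3 k) = gB w (E3 k)) : v = w := by
  funext k
  have hk := h k
  fin_cases k <;> simp [gB, E3] at hk ⊢ <;> linarith

lemma koszul_nablaF11 (α β : ℝ) (x y z : Fin 3 → ℝ) :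
    2 * gB (nablaF11 α β x y) z =
      gB (brF11 α β x y) z + gB (brF11 α β z x) y + gB (brF11 α β z y) x := by
  simp only [nablaF11_apply, gB, brF11, Matrix.cons_val, Pi.smul_apply, smul_eq_mul]
  ring

lemma eq_nablaF11_of_koszul (α β : ℝ)
    {nabla : (Fin 3 → ℝ) →ₗ[ℝ] (Fin 3 → ℝ) →ₗ[ℝ] (Fin 3 → ℝ)}
    (hK : ∀ i j k : Fin 3, 2 * gB (nabla (E3 i) (E3 j)) (E3 k) =
      gB (brF11 α β (E3 i) (E3 j)) (E3 k) + gB (brF11 α β (E3 k) (E3 i)) (E3 j)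
        + gB (brF11 α β (E3 k) (E3 j)) (E3 i)) :
    nabla = nablaF11 α β := by
  refine (Pi.basisFun ℝ (Fin 3)).ext fun i => (Pi.basisFun ℝ (Fin 3)).ext fun j => ?_
  refine eq_of_forall_gB_E3 fun k => ?_
  have := koszul_nablaF11 α β (E3 i) (E3 j) (E3 k)
  simp only [Pi.basisFun_apply]
  change gB (nabla (E3 i) (E3 j)) (E3 k) = gB (nablaF11 α β (E3 i) (E3 j)) (E3 k)
  linarith [hK i j k]

lemma curv_nablaF11 (α β : ℝ) (x y z : Fin 3 → ℝ) :
    curv (nablaF11 α β) (brF11 α β) x y z = -(nablaF11 α β (brF11 α β x y) z) := by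
  have hsymm : nablaF11 α β x (nablaF11 α β y z) = nablaF11 α β y (nablaF11 α β x z) := by
    simp only [nablaF11, LinearMap.smulRight_apply, LinearMap.proj_apply, LinearMap.smul_apply,
      map_smul]
    exact smul_comm _ _ _
  simp [curv, hsymm]

lemma gB_nablaF11_phi3 (α β : ℝ) (x z w : Fin 3 → ℝ) :
    gB (nablaF11 α β x (phi3 z)) (phi3 w) = 0 := by
  simp [nablaF11_apply, gB, phi3]

/-- curvature of the F₁₁-case, τ = 2(β² - α²), and R(x,y,φz,φw) = 0. -/
theorem F11_curvature (α β : ℝ)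
    (nabla : (Fin 3 → ℝ) →ₗ[ℝ] (Fin 3 → ℝ) →ₗ[ℝ] (Fin 3 → ℝ))
    (hK : ∀ i j k : Fin 3, 2 * gB (nabla (E3 i) (E3 j)) (E3 k) =
      gB (brF11 α β (E3 i) (E3 j)) (E3 k) + gB (brF11 α β (E3 k) (E3 i)) (E3 j)
        + gB (brF11 α β (E3 k) (E3 j)) (E3 i)) :
    Rc nabla (brF11 α β) 0 1 0 1 = α ^ 2 ∧ Rc nabla (brF11 α β) 0 2 0 2 = β ^ 2 ∧
    Rc nabla (brF11 α β) 0 1 2 0 = -(α * β) ∧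
    scal nabla (brF11 α β) = 2 * (β ^ 2 - α ^ 2) ∧
    (∀ x y z w : Fin 3 → ℝ,
      gB (curv nabla (brF11 α β) x y (phi3 z)) (phi3 w) = 0) := by
  obtain rfl := eq_nablaF11_of_koszul α β hK
  refine ⟨?_, ?_, ?_, ?_, fun x y z w => ?_⟩
  · simp [Rc, curv_nablaF11, nablaF11_apply, brF11, gB, E3, sq]
  · simp [Rc, curv_nablaF11, nablaF11_apply, brF11, gB, E3, sq]
  · simp [Rc, curv_nablaF11, nablaF11_apply, brF11, gB, E3]
  · simp [scal, ricci, Rc, curv_nablaF11, nablaF11_apply, brF11, gB, E3]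
    ring
  · have h := gB_nablaF11_phi3 α β (brF11 α β x y) z w
    rw [curv_nablaF11]
    simp only [gB, Pi.neg_apply] at h ⊢
    linarith
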